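/- Let B be a finite left brace with |B| > 1 and Soc(B) = {0}, and let X ⊆ B be a transitive cycle base of B. Then the group homomorphism Φ : (B,∘) → Sym(X) sending b to the restriction of λ_b to X (well defined since λ_b(X) = X) is injective, and its image equals the subgroup of Sym(X) generated by {λ_x|_X : x ∈ X}. In particular (B,∘) is isomorphic to the permutation group G(X) associated to the cycle set X. -/

import Mathlib

/-!
The λ-maps are additive, so `λ_c` is determined by its values on the additive generators `X`;
if `Φ c = 1` then `λ_c = id`, i.e. `c ∈ Soc(B) = {0}`. For the image, `b + x = b ∘ λ_{b⁻¹}(x)`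
with `λ_{b⁻¹}(x) ∈ X`, so the `∘`-subgroup generated by `X` is stable under adding and subtracting
elements of `X`; it therefore contains the additive closure of `X`, which is all of `B`. Hence `X`
generates `(B, ∘)` and `Φ(B)` is generated by `Φ(X)`.
-/

/-- A left brace structure on an additive abelian group `A`: a group operation `mul`
(with identity `one` and inverses `inv`) satisfying `a ∘ (b + c) + a = a ∘ b + a ∘ c`. -/
structure LeftBrace (A : Type*) [AddCommGroup A] where
  mul : A → A → A
  one : A
  inv : A → A
  mul_assoc' : ∀ a b c, mul (mul a b) c = mul a (mul b c)
  one_mul' : ∀ a, mul one a = a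
  mul_one' : ∀ a, mul a one = a
  inv_mul' : ∀ a, mul (inv a) a = one
  mul_inv' : ∀ a, mul a (inv a) = one
  compat : ∀ a b c, mul a (b + c) + a = mul a b + mul a c

namespace LeftBrace

variable {A : Type*} [AddCommGroup A]

/-- The map `λ_a : b ↦ -a + a ∘ b`. -/
def lam (B : LeftBrace A) (a b : A) : A := -a + B.mul a b

/-- The cycle set operation `x · y := λ_x⁻¹ (y)` associated to a left brace. -/
noncomputable def cop (B : LeftBrace A) (x y : A) : A :=
  @Function.invFun A A ⟨0⟩ (B.lam x) y

/-- An ideal of a left brace: a normal subgroup of `(A, ∘)` invariant under all `λ_a`. -/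
def IsIdeal (B : LeftBrace A) (I : Set A) : Prop :=
  B.one ∈ I ∧ (∀ a ∈ I, ∀ b ∈ I, B.mul a b ∈ I) ∧ (∀ a ∈ I, B.inv a ∈ I) ∧
    (∀ g : A, ∀ a ∈ I, B.mul (B.mul g a) (B.inv g) ∈ I) ∧
    (∀ g : A, ∀ a ∈ I, B.lam g a ∈ I)

variable (B : LeftBrace A)

theorem mul_zero' (a : A) : B.mul a 0 = a := by
  have h := B.compat a 0 0
  rw [add_zero] at h
  exact add_left_cancel h.symm

theorem one_eq_zero : B.one = 0 := by
  simpa only [B.mul_zero'] using B.one_mul' 0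

theorem mul_add' (a b c : A) : B.mul a (b + c) = B.mul a b + B.mul a c - a :=
  eq_sub_of_add_eq (B.compat a b c)

theorem mul_neg' (a b : A) : B.mul a (-b) = a + a - B.mul a b := by
  have h := B.compat a b (-b)
  rw [add_neg_cancel, B.mul_zero'] at h
  rw [h]; abel

theorem lam_add (a b c : A) : B.lam a (b + c) = B.lam a b + B.lam a c := by
  simp only [lam, B.mul_add']; abel

theorem lam_mul (a b c : A) : B.lam (B.mul a b) c = B.lam a (B.lam b c) := by
  simp only [lam, B.mul_add', B.mul_neg', ← B.mul_assoc']
  abel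

theorem lam_one (b : A) : B.lam B.one b = b := by
  rw [lam, B.one_mul', B.one_eq_zero, neg_zero, zero_add]

theorem mul_eq_add_lam (a b : A) : B.mul a b = a + B.lam a b := by
  simp [lam]

theorem add_eq_mul_lam_inv (b x : A) : b + x = B.mul b (B.lam (B.inv b) x) := by
  rw [mul_eq_add_lam, ← lam_mul, mul_inv', lam_one]

def lamHom (a : A) : A →+ A := AddMonoidHom.mk' (B.lam a) (B.lam_add a)

def socle : Set A := {a | ∀ b, a + b = B.mul a b}

theorem mem_socle_of_lam_eqOn {X : Set A} (hgen : AddSubgroup.closure X = ⊤) {c : A}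
    (hc : ∀ x ∈ X, B.lam c x = x) : c ∈ B.socle := by
  have hid : B.lamHom c = AddMonoidHom.id A := AddMonoidHom.eq_of_eqOn_dense hgen hc
  intro b
  rw [mul_eq_add_lam]
  exact congrArg (c + ·) (DFunLike.congr_fun hid b).symm

/-- The group `(A, ∘)`, on a type synonym of `A`. -/
def Circ (_ : LeftBrace A) : Type _ := A

instance : Group B.Circ where
  mul := B.mul
  one := B.one
  inv := B.inv
  mul_assoc := B.mul_assoc'
  one_mul := B.one_mul'
  mul_one := B.mul_one'
  inv_mul_cancel := B.inv_mul'

theorem closure_eq_top_of_lam_invariant {X : Set A} (hclosed : ∀ a : A, ∀ x ∈ X, B.lam a x ∈ X)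
    (hgen : AddSubgroup.closure X = ⊤) : Subgroup.closure (G := B.Circ) X = ⊤ := by
  set H := Subgroup.closure (G := B.Circ) X
  have hshift : ∀ a ∈ AddSubgroup.closure X, ∀ b : A, b + a ∈ H ↔ b ∈ H := by
    intro a ha
    induction ha using AddSubgroup.closure_induction with
    | mem x hx =>
      intro b
      rw [B.add_eq_mul_lam_inv b x]
      exact H.mul_mem_cancel_right (Subgroup.subset_closure (hclosed _ x hx))
    | zero => simp
    | add a a' _ _ iha iha' => intro b; rw [← add_assoc, iha', iha]
    | neg a _ iha => intro b; rw [← iha, neg_add_cancel_right]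
  have h0 : (0 : A) ∈ H := B.one_eq_zero ▸ H.one_mem
  refine (Subgroup.eq_top_iff' H).mpr fun (a : A) => ?_
  have ha := (hshift a (hgen ▸ AddSubgroup.mem_top a) 0).mpr h0
  rwa [zero_add] at ha

section Restriction

variable {B} {X : Set A} {Φ : A → Equiv.Perm X}
  (hΦ : ∀ (b : A) (x : X), ((Φ b x : X) : A) = B.lam b x)
include hΦ

theorem map_mul_of_lam (a b : A) : Φ (B.mul a b) = Φ a * Φ b := by
  ext x
  rw [hΦ, Equiv.Perm.mul_apply, hΦ, hΦ, B.lam_mul]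

def lamRestrictHom : B.Circ →* Equiv.Perm X :=
  MonoidHom.mk' (M := B.Circ) Φ fun a b => map_mul_of_lam hΦ a b

theorem lamRestrictHom_apply (a : B.Circ) : lamRestrictHom hΦ a = Φ a := rfl

theorem lamRestrictHom_injective (hsoc : B.socle = {0}) (hgen : AddSubgroup.closure X = ⊤) :
    Function.Injective (lamRestrictHom hΦ) := by
  refine (injective_iff_map_eq_one _).mpr fun c hc => ?_
  have hfix : ∀ x ∈ X, B.lam c x = x := fun x hx => by
    rw [← hΦ c ⟨x, hx⟩, ← lamRestrictHom_apply hΦ, hc, Equiv.Perm.one_apply]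
  have : c ∈ B.socle := B.mem_socle_of_lam_eqOn hgen hfix
  rw [hsoc] at this
  exact this.trans B.one_eq_zero.symm

theorem lamRestrictHom_range (hclosed : ∀ a : A, ∀ x ∈ X, B.lam a x ∈ X)
    (hgen : AddSubgroup.closure X = ⊤) :
    (lamRestrictHom hΦ).range = Subgroup.closure {p | ∃ x : X, p = Φ x} := by
  calc (lamRestrictHom hΦ).range
      = (Subgroup.closure (G := B.Circ) X).map (lamRestrictHom hΦ) := by
        rw [B.closure_eq_top_of_lam_invariant hclosed hgen, MonoidHom.range_eq_map]
    _ = Subgroup.closure (Φ '' X) := MonoidHom.map_closure _ _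
    _ = Subgroup.closure {p | ∃ x : X, p = Φ x} := by
        congr 1
        ext p
        simp [eq_comm]

end Restriction

end LeftBrace

theorem stmt10_general {A : Type*} [AddCommGroup A] (B : LeftBrace A)
    -- Soc(B) = {0}
    (hsoc : {a : A | ∀ b, a + b = B.mul a b} = {0})
    -- X is a transitive cycle base: an orbit of the λ-action generating (A, +)
    (X : Set A)
    (hclosed : ∀ a : A, ∀ x ∈ X, B.lam a x ∈ X)
    (hgen : AddSubgroup.closure X = ⊤)
    -- Φ sends b to the restriction of λ_b to X
    (Φ : A → Equiv.Perm X)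
    (hΦ : ∀ (b : A) (x : X), ((Φ b x : X) : A) = B.lam b (x : A)) :
    -- Φ is a group homomorphism from (B, ∘) to Sym(X)
    (∀ a b : A, Φ (B.mul a b) = Φ a * Φ b) ∧
    -- Φ is injective
    Function.Injective Φ ∧
    -- the image of Φ is the subgroup generated by the restrictions λ_x|_X, x ∈ X
    Set.range Φ = (Subgroup.closure {p : Equiv.Perm X | ∃ x : X, p = Φ (x : A)} : Set (Equiv.Perm X)) ∧
    -- in particular (B, ∘) is isomorphic to the permutation group G(X) generated by the σ_x
    ∃ e : A ≃ (Subgroup.closure {p : Equiv.Perm X | ∃ x : X, p = (Φ (x : A))⁻¹} :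
        Subgroup (Equiv.Perm X)),
      ∀ a b : A, ((e (B.mul a b) : Equiv.Perm X)) = (e a : Equiv.Perm X) * (e b : Equiv.Perm X) := by
  have hinj := LeftBrace.lamRestrictHom_injective hΦ hsoc hgen
  have hrange := LeftBrace.lamRestrictHom_range hΦ hclosed hgen
  have hinv : Subgroup.closure {p : Equiv.Perm X | ∃ x : X, p = (Φ x)⁻¹} =
      Subgroup.closure {p | ∃ x : X, p = Φ x} := by
    rw [← Subgroup.closure_inv {p | ∃ x : X, p = Φ x}]
    congr 1
    ext p
    simp [inv_eq_iff_eq_inv]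
  refine ⟨LeftBrace.map_mul_of_lam hΦ, hinj, by rw [← hrange, MonoidHom.coe_range]; rfl, ?_⟩
  let e := (MonoidHom.ofInjective hinj).trans (MulEquiv.subgroupCongr (hrange.trans hinv.symm))
  exact ⟨e.toEquiv, fun a b => congrArg Subtype.val (map_mul (M := B.Circ) e a b)⟩

theorem stmt10 {A : Type*} [AddCommGroup A] [Finite A] (B : LeftBrace A)
    (hcard : 1 < Nat.card A)
    -- Soc(B) = {0}
    (hsoc : {a : A | ∀ b, a + b = B.mul a b} = {0})
    -- X is a transitive cycle base: an orbit of the λ-action generating (A, +)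
    (X : Set A) (hne : X.Nonempty)
    (hclosed : ∀ a : A, ∀ x ∈ X, B.lam a x ∈ X)
    (horbit : ∀ x ∈ X, ∀ y ∈ X, ∃ a : A, B.lam a x = y)
    (hgen : AddSubgroup.closure X = ⊤)
    -- Φ sends b to the restriction of λ_b to X
    (Φ : A → Equiv.Perm X)
    (hΦ : ∀ (b : A) (x : X), ((Φ b x : X) : A) = B.lam b (x : A)) :
    -- Φ is a group homomorphism from (B, ∘) to Sym(X)
    (∀ a b : A, Φ (B.mul a b) = Φ a * Φ b) ∧
    -- Φ is injective
    Function.Injective Φ ∧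
    -- the image of Φ is the subgroup generated by the restrictions λ_x|_X, x ∈ X
    Set.range Φ = (Subgroup.closure {p : Equiv.Perm X | ∃ x : X, p = Φ (x : A)} : Set (Equiv.Perm X)) ∧
    -- in particular (B, ∘) is isomorphic to the permutation group G(X) generated by the σ_x
    ∃ e : A ≃ (Subgroup.closure {p : Equiv.Perm X | ∃ x : X, p = (Φ (x : A))⁻¹} :
        Subgroup (Equiv.Perm X)),
      ∀ a b : A, ((e (B.mul a b) : Equiv.Perm X)) = (e a : Equiv.Perm X) * (e b : Equiv.Perm X) :=
  stmt10_general B hsoc X hclosed hgen Φ hΦ
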